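/- arXiv:1410.5479 — 6 statements merged into one kernel-verified Lean document; each statement's English description precedes it below -/
import Mathlib

section
/- For integers k, l ≥ 0, the alternating weighted sum ∑_{a=0}^{2k} C(2k,a)·C(2l, k+l−a)·((k−a)^3 − (k−a)) equals 0. Equivalently, −(2k)(2k−1)(2k−2)·C(2k+2l−3, k+l) + 3(k−1)(2k)(2k−1)·C(2k+2l−2, k+l) − 6k^2(k−1)·C(2k+2l−1, k+l) + (k^3−k)·C(2k+2l, k+l) = 0. -/
/-- Generalized binomial coefficient: `0` for `k < 0`; usual binomial for `n ≥ 0`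
(zero when `k > n`); for `n < 0`: `(-1)^k * C (k - n - 1) k` when `k ≥ 0`,
`(-1)^(n-k) * C (-k - 1) (n - k)` when `k ≤ n`, and `0` otherwise. -/
def C (n k : ℤ) : ℤ :=
  if 0 ≤ n then (if 0 ≤ k then (n.toNat.choose k.toNat : ℤ) else 0)
  else if 0 ≤ k then (-1) ^ k.toNat * ((k - n - 1).toNat.choose k.toNat : ℤ)
  else if k ≤ n then (-1) ^ (n - k).toNat * ((-k - 1).toNat.choose (n - k).toNat : ℤ)
  else 0

lemma C_nat (n m : ℕ) : C n m = (n.choose m : ℤ) := by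
  simp [C]

lemma C_symm (n x : ℤ) (hn : 0 ≤ n) : C n x = C n (n - x) := by
  unfold C
  simp only [hn, if_true]
  rcases le_or_gt 0 x with hx | hx
  · rcases le_or_gt x n with hxn | hxn
    · have h1 : (0:ℤ) ≤ n - x := by omega
      simp only [hx, h1, if_true]
      have e1 : (n - x).toNat = n.toNat - x.toNat := by omega
      rw [e1, Nat.choose_symm (by omega : x.toNat ≤ n.toNat)]
    · simp only [hx, if_true, if_neg (by omega : ¬ (0:ℤ) ≤ n - x)]
      rw [Nat.choose_eq_zero_of_lt (by omega : n.toNat < x.toNat)]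
      simp
  · simp only [if_neg (by omega : ¬ (0:ℤ) ≤ x), if_pos (by omega : (0:ℤ) ≤ n - x)]
    rw [Nat.choose_eq_zero_of_lt (by omega : n.toNat < (n - x).toNat)]
    simp

/-- For `k, l ≥ 0` the alternating weighted sum
`∑_{a=0}^{2k} C(2k,a) C(2l,k+l−a) ((k−a)^3 − (k−a))` vanishes; equivalently the
corresponding four-term binomial expression vanishes. -/
theorem stmt1 (k l : ℕ) :
    (∑ a ∈ Finset.range (2 * k + 1),
        C (2 * k) a * C (2 * l) ((k : ℤ) + l - a) *
          (((k : ℤ) - a) ^ 3 - ((k : ℤ) - a)) = 0) ∧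
      (-(2 * (k : ℤ)) * (2 * k - 1) * (2 * k - 2) * C (2 * k + 2 * l - 3) ((k : ℤ) + l) +
          3 * ((k : ℤ) - 1) * (2 * k) * (2 * k - 1) * C (2 * k + 2 * l - 2) ((k : ℤ) + l) -
          6 * (k : ℤ) ^ 2 * ((k : ℤ) - 1) * C (2 * k + 2 * l - 1) ((k : ℤ) + l) +
          ((k : ℤ) ^ 3 - k) * C (2 * k + 2 * l) ((k : ℤ) + l) = 0) := by
  constructor
  · -- symmetry argument
    set f : ℕ → ℤ := fun a => C (2 * k) a * C (2 * l) ((k : ℤ) + l - a) *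
          (((k : ℤ) - a) ^ 3 - ((k : ℤ) - a)) with hf
    have hrefl : ∑ a ∈ Finset.range (2 * k + 1), f (2 * k + 1 - 1 - a) =
        ∑ a ∈ Finset.range (2 * k + 1), f a := Finset.sum_range_reflect f (2 * k + 1)
    have hneg : ∀ a ∈ Finset.range (2 * k + 1), f (2 * k + 1 - 1 - a) = - f a := by
      intro a ha
      simp only [Finset.mem_range] at ha
      have ha' : a ≤ 2 * k := by omega
      have hcast : ((2 * k + 1 - 1 - a : ℕ) : ℤ) = 2 * (k : ℤ) - a := by omega
      simp only [hf, hcast]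
      have e1 : C (2 * (k:ℤ)) (2 * (k:ℤ) - a) = C (2 * (k:ℤ)) a := by
        rw [C_symm (2 * (k:ℤ)) (2 * (k:ℤ) - a) (by positivity)]
        congr 1
        ring
      have e2 : C (2 * (l:ℤ)) ((k : ℤ) + l - (2 * (k:ℤ) - a)) = C (2 * (l:ℤ)) ((k : ℤ) + l - a) := by
        rw [C_symm (2 * (l:ℤ)) ((k : ℤ) + l - (2 * (k:ℤ) - a)) (by positivity)]
        congr 1
        ring
      rw [e1, e2]
      ring
    have := Finset.sum_congr rfl hneg
    rw [this, Finset.sum_neg_distrib] at hrefl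
    linarith
  · -- four-term identity
    rcases Nat.lt_or_ge (k + l) 2 with hm | hm
    · have hk : k ≤ 1 := by omega
      have hl : l ≤ 1 := by omega
      interval_cases k <;> interval_cases l <;> first | omega | norm_num [C]
    · set m := k + l with hmdef
      have e0 : (2 * (k:ℤ) + 2 * l) = ((2 * m : ℕ) : ℤ) := by omega
      have e1 : (2 * (k:ℤ) + 2 * l - 1) = ((2 * m - 1 : ℕ) : ℤ) := by omega
      have e2 : (2 * (k:ℤ) + 2 * l - 2) = ((2 * m - 2 : ℕ) : ℤ) := by omega
      have e3 : (2 * (k:ℤ) + 2 * l - 3) = ((2 * m - 3 : ℕ) : ℤ) := by omega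
      have em : ((k : ℤ) + l) = ((m : ℕ) : ℤ) := by omega
      rw [e3, e2, e1, e0, em, C_nat, C_nat, C_nat, C_nat]
      set c0 : ℤ := ((2 * m).choose m : ℤ)
      set c1 : ℤ := ((2 * m - 1).choose m : ℤ)
      set c2 : ℤ := ((2 * m - 2).choose m : ℤ)
      set c3 : ℤ := ((2 * m - 3).choose m : ℤ)
      have h1 : c1 * (2 * (m:ℤ)) = c0 * m := by
        have := Nat.choose_mul_succ_eq (2 * m - 1) m
        have h : 2 * m - 1 + 1 = 2 * m := by omega
        rw [h] at this
        have h' : 2 * m - m = m := by omega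
        rw [h'] at this
        have := congrArg (Nat.cast : ℕ → ℤ) this
        push_cast at this
        linarith [this]
      have h2 : c2 * (2 * (m:ℤ) - 1) = c1 * ((m:ℤ) - 1) := by
        have := Nat.choose_mul_succ_eq (2 * m - 2) m
        have h : 2 * m - 2 + 1 = 2 * m - 1 := by omega
        rw [h] at this
        have h' : 2 * m - 1 - m = m - 1 := by omega
        rw [h'] at this
        have := congrArg (Nat.cast : ℕ → ℤ) this
        push_cast at this
        rw [Nat.cast_sub (by omega), Nat.cast_sub (by omega)] at this
        push_cast at this
        linarith [this]
      have h3 : c3 * (2 * (m:ℤ) - 2) = c2 * ((m:ℤ) - 2) := by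
        have := Nat.choose_mul_succ_eq (2 * m - 3) m
        have h : 2 * m - 3 + 1 = 2 * m - 2 := by omega
        rw [h] at this
        have h' : 2 * m - 2 - m = m - 2 := by omega
        rw [h'] at this
        have := congrArg (Nat.cast : ℕ → ℤ) this
        rw [Nat.cast_mul, Nat.cast_mul, Nat.cast_sub (by omega), Nat.cast_sub (by omega)] at this
        push_cast at this
        linarith [this]
      have h1' : c0 = 2 * c1 := by
        have hm0 : (m : ℤ) ≠ 0 := by exact_mod_cast (by omega : m ≠ 0)
        have : (m:ℤ) * (2 * c1) = (m:ℤ) * c0 := by linarith [h1]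
        have := mul_left_cancel₀ hm0 this
        omega
      have hml : (m : ℤ) = (k : ℤ) + l := by push_cast [hmdef]; ring
      have hD : (2 * (m:ℤ) - 1) * (2 * (m:ℤ) - 2) ≠ 0 := by
        have : (2 : ℤ) ≤ (m : ℤ) := by exact_mod_cast hm
        intro h
        rcases mul_eq_zero.1 h with h | h <;> omega
      apply mul_left_cancel₀ hD
      rw [mul_zero]
      linear_combination ((-(2 * (k : ℤ)) * (2 * k - 1) * (2 * k - 2)) * (2 * (m:ℤ) - 1)) * h3 +
        ((-(2 * (k : ℤ)) * (2 * k - 1) * (2 * k - 2)) * ((m:ℤ) - 2) +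
          (3 * ((k : ℤ) - 1) * (2 * k) * (2 * k - 1)) * (2 * (m:ℤ) - 2)) * h2 +
        (((k : ℤ) ^ 3 - k) * (2 * (m:ℤ) - 1) * (2 * (m:ℤ) - 2)) * h1'
end

section
/- For integers k ≥ 0 and l ≤ −2 with k + l ≤ −2, the double sum ∑_{a=0}^{k−2} ∑_{b=0}^{−l+1} (−1)^{a+l−b} C(2k,a)·C(−l+1,b)·C(k−a−l+b−1, k−2−a) equals (−1)^{k+l}·C(2k+2l−3, k+l) − δ_{k+l,1} − δ_{k+l,0}. -/
/-!
The right-hand side vanishes since `C n k = 0` for `n < k < 0`. On the left, for fixed `a` the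
inner sum over `b` is, up to sign, the `(1 - l)`-th forward difference at `0` of
`b ↦ C(b + k - a - l - 1, k - 2 - a)`, a polynomial in `b` of degree `k - 2 - a < 1 - l`;
so it vanishes.
-/

open Finset fwdDiff

theorem C_natCast (n k : ℕ) : C n k = n.choose k := by
  simp [C]

theorem C_eq_zero_of_lt_of_neg {n k : ℤ} (hnk : n < k) (hk : k < 0) : C n k = 0 := by
  simp [C, show ¬ 0 ≤ n by omega, show ¬ 0 ≤ k by omega, show ¬ k ≤ n by omega]

theorem fwdDiff_iter_choose_eq_zero_of_lt {r n : ℕ} (h : r < n) :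
    Δ_[1] ^[n] (fun x ↦ x.choose r : ℕ → ℤ) = 0 := by
  obtain ⟨j, rfl⟩ := Nat.exists_eq_add_of_lt h
  rw [show r + j + 1 = j + 1 + r by ring, Function.iterate_add_apply,
    (by simpa using fwdDiff_iter_choose 0 r :
      Δ_[1] ^[r] (fun x ↦ x.choose r : ℕ → ℤ) = fun _ ↦ 1), Function.iterate_succ_apply,
    fwdDiff_const]
  exact Function.iterate_fixed (fwdDiff_const 1 0) j

theorem sum_range_neg_one_pow_mul_choose_mul_choose_add {r n : ℕ} (h : r < n) (c : ℕ) :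
    ∑ b ∈ range (n + 1), (-1 : ℤ) ^ b * n.choose b * (b + c).choose r = 0 := by
  have hdiff := fwdDiff_iter_comp_add 1 (fun x ↦ x.choose r : ℕ → ℤ) c n 0
  rw [fwdDiff_iter_choose_eq_zero_of_lt h, Pi.zero_apply, fwdDiff_iter_eq_sum_shift] at hdiff
  have hsign : ∀ b ∈ range (n + 1), (-1 : ℤ) ^ b = (-1) ^ n * (-1) ^ (n - b) := by
    intro b hb
    obtain ⟨d, rfl⟩ := Nat.exists_eq_add_of_le (Nat.lt_succ_iff.mp (mem_range.mp hb))
    rw [Nat.add_sub_cancel_left, pow_add, mul_assoc, ← pow_add, Even.neg_one_pow ⟨d, rfl⟩,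
      mul_one]
  rw [sum_congr rfl fun b hb ↦ by rw [hsign b hb], ← mul_zero ((-1 : ℤ) ^ n), ← hdiff,
    mul_sum]
  refine sum_congr rfl fun b _ ↦ ?_
  simp only [zero_add, smul_eq_mul, mul_one]
  ring

theorem neg_one_zpow_sub_natCast {K : Type*} [DivisionRing K] (z : ℤ) (n : ℕ) :
    (-1 : K) ^ (z - n) = (-1) ^ z * (-1) ^ n := by
  rw [zpow_sub₀ (by norm_num), zpow_natCast, div_eq_mul_inv, ← inv_pow, inv_neg, inv_one]

theorem stmt3_general (k : ℕ) (l : ℤ) (hkl : (k : ℤ) + l ≤ -2) :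
    ∑ a ∈ Finset.range (k - 1), ∑ b ∈ Finset.range (-l + 2).toNat,
        (-1 : ℚ) ^ ((a : ℤ) + l - b) *
          (C (2 * k) a * C (-l + 1) b * C ((k : ℤ) - a - l + b - 1) ((k : ℤ) - 2 - a) : ℤ) =
      (-1 : ℚ) ^ ((k : ℤ) + l) * (C (2 * k + 2 * l - 3) ((k : ℤ) + l) : ℤ) -
        (if (k : ℤ) + l = 1 then 1 else 0) - (if (k : ℤ) + l = 0 then 1 else 0) := by
  obtain ⟨m, rfl⟩ : ∃ m : ℕ, l = 1 - m := ⟨(1 - l).toNat, by omega⟩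
  rw [C_eq_zero_of_lt_of_neg (by omega) (by omega), if_neg (by omega), if_neg (by omega),
    Int.cast_zero, mul_zero, sub_zero, sub_zero, show (-(1 - m : ℤ) + 2).toNat = m + 1 by omega]
  refine sum_eq_zero fun a ha ↦ ?_
  obtain ⟨r, hr⟩ : ∃ r : ℕ, (k : ℤ) - 2 - a = r := ⟨k - 2 - a, by grind⟩
  have hterm : ∀ b : ℕ, (-1 : ℚ) ^ ((a : ℤ) + (1 - m) - b) *
      (C (2 * k) a * C (-(1 - m) + 1) b *
        C ((k : ℤ) - a - (1 - m) + b - 1) ((k : ℤ) - 2 - a) : ℤ) =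
      (-1 : ℚ) ^ ((a : ℤ) + (1 - m)) * (C (2 * k) a : ℤ) *
        (((-1 : ℤ) ^ b * m.choose b * (b + (r + m)).choose r : ℤ) : ℚ) := by
    intro b
    rw [show -(1 - m : ℤ) + 1 = (m : ℕ) by ring,
      show (k : ℤ) - a - (1 - m) + b - 1 = (b + (r + m) : ℕ) by push_cast; omega, hr,
      C_natCast, C_natCast, neg_one_zpow_sub_natCast]
    push_cast
    ring
  rw [sum_congr rfl fun b _ ↦ hterm b, ← mul_sum, ← Int.cast_sum,
    sum_range_neg_one_pow_mul_choose_mul_choose_add (by omega), Int.cast_zero, mul_zero]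

/-- For `k ≥ 0`, `l ≤ −2` with `k + l ≤ −2`:
`∑_{a=0}^{k−2} ∑_{b=0}^{−l+1} (−1)^{a+l−b} C(2k,a) C(−l+1,b) C(k−a−l+b−1, k−2−a)
  = (−1)^{k+l} C(2k+2l−3, k+l) − δ_{k+l,1} − δ_{k+l,0}`. -/
theorem stmt3 (k : ℕ) (l : ℤ) (hl : l ≤ -2) (hkl : (k : ℤ) + l ≤ -2) :
    ∑ a ∈ Finset.range (k - 1), ∑ b ∈ Finset.range (-l + 2).toNat,
        (-1 : ℚ) ^ ((a : ℤ) + l - b) *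
          (C (2 * k) a * C (-l + 1) b * C ((k : ℤ) - a - l + b - 1) ((k : ℤ) - 2 - a) : ℤ) =
      (-1 : ℚ) ^ ((k : ℤ) + l) * (C (2 * k + 2 * l - 3) ((k : ℤ) + l) : ℤ) -
        (if (k : ℤ) + l = 1 then 1 else 0) - (if (k : ℤ) + l = 0 then 1 else 0) :=
  stmt3_general k l hkl
end

section
/- For integers k ≥ 0 and l ≤ −2, the double sum ∑_{a=0}^{k−2} ∑_{b=0}^{−l+1} (−1)^{a+l−b} C(2k,a)·C(−l+1,b)·C(k−a−l+b−1, k−2−a)·b equals (−l+1)·((−1)^{k+l+1}·C(2k+2l−3, k+l−1) − δ_{k+l,1}). -/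
lemma negone_zpow_sub (x y : ℕ) : (-1:ℚ)^((x:ℤ) - y) = (-1)^x * (-1)^y := by
  rw [zpow_sub₀ (by norm_num : (-1:ℚ) ≠ 0), zpow_natCast, zpow_natCast,
    div_eq_mul_inv, ← inv_pow]
  norm_num

lemma sumB (r : ℕ) : ∀ (n y : ℕ),
    ∑ c ∈ Finset.range (n+1), (-1:ℚ)^c * (n.choose c) * ((y+c).choose r)
      = (-1)^n * (if n ≤ r then ((y.choose (r-n)) : ℚ) else 0) := by
  intro n
  induction n with
  | zero => intro y; simp
  | succ n ih =>
    intro y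
    have key : ∑ c ∈ Finset.range (n+1+1), (-1:ℚ)^c * ((n+1).choose c) * ((y+c).choose r)
        = (∑ c ∈ Finset.range (n+1), (-1:ℚ)^c * (n.choose c) * ((y+c).choose r))
          - ∑ c ∈ Finset.range (n+1), (-1:ℚ)^c * (n.choose c) * (((y+1)+c).choose r) := by
      rw [Finset.sum_range_succ' (fun c => (-1:ℚ)^c * ((n+1).choose c) * ((y+c).choose r)) (n+1)]
      have e1 : ∀ c ∈ Finset.range (n+1),
          (-1:ℚ)^(c+1) * ((n+1).choose (c+1)) * ((y+(c+1)).choose r)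
          = -((-1:ℚ)^c * (n.choose c) * (((y+1)+c).choose r))
            + (-1:ℚ)^(c+1) * (n.choose (c+1)) * ((y+(c+1)).choose r) := by
        intro c _
        have hp : ((n+1).choose (c+1) : ℚ) = n.choose c + n.choose (c+1) := by
          exact_mod_cast congrArg Nat.cast (Nat.choose_succ_succ n c)
        have hy : (y+1) + c = y + (c+1) := by ring
        rw [hp, hy, pow_succ]; ring
      rw [Finset.sum_congr rfl e1, Finset.sum_add_distrib, Finset.sum_neg_distrib]
      have e2 : ∑ c ∈ Finset.range (n+1), (-1:ℚ)^(c+1) * (n.choose (c+1)) * ((y+(c+1)).choose r)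
          = (∑ c ∈ Finset.range (n+1), (-1:ℚ)^c * (n.choose c) * ((y+c).choose r))
            - (y.choose r : ℚ) := by
        have t1 := (Finset.sum_range_succ' (fun c => (-1:ℚ)^c * (n.choose c) * ((y+c).choose r)) (n+1))
        rw [Finset.sum_range_succ] at t1
        simp only [Nat.choose_succ_self, Nat.cast_zero, mul_zero, add_zero, pow_zero,
          Nat.choose_zero_right, Nat.cast_one, one_mul, mul_one, Nat.add_zero] at t1
        linarith [t1]
      rw [e2]
      simp
      ring
    rw [key, ih y, ih (y+1)]
    by_cases h1 : n + 1 ≤ r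
    · have h0 : n ≤ r := by omega
      rw [if_pos h1, if_pos h0, if_pos h0]
      have hrn : r - n = (r - (n+1)) + 1 := by omega
      rw [hrn]
      have pas : ((y+1).choose (r-(n+1)+1) : ℚ) = y.choose (r-(n+1)) + y.choose (r-(n+1)+1) := by
        exact_mod_cast congrArg Nat.cast (Nat.choose_succ_succ y (r-(n+1)))
      rw [pas, pow_succ]; ring
    · rw [if_neg h1]
      by_cases h0 : n ≤ r
      · have : r - n = 0 := by omega
        rw [if_pos h0, if_pos h0, this]
        rw [pow_succ]; simp
      · rw [if_neg h0, if_neg h0]; ring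


lemma sumAlt (N : ℕ) : ∀ (j : ℕ),
    ∑ a ∈ Finset.range (j+1), (-1:ℚ)^a * ((N+1).choose a) = (-1)^j * (N.choose j) := by
  intro j
  induction j with
  | zero => simp
  | succ j ih =>
    rw [Finset.sum_range_succ, ih]
    have hp : ((N+1).choose (j+1) : ℚ) = N.choose j + N.choose (j+1) := by
      exact_mod_cast congrArg Nat.cast (Nat.choose_succ_succ N j)
    rw [hp, pow_succ]; ring

lemma sumC : ∀ (p N j : ℕ),
    ∑ a ∈ Finset.range (j+1), (-1:ℚ)^a * ((N+p+1).choose a) * ((p + j - a).choose p)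
      = (-1)^j * (N.choose j) := by
  intro p
  induction p with
  | zero =>
    intro N j
    have : ∀ a ∈ Finset.range (j+1),
        (-1:ℚ)^a * ((N+0+1).choose a) * ((0 + j - a).choose 0) = (-1)^a * ((N+1).choose a) := by
      intro a _; simp
    rw [Finset.sum_congr rfl this, sumAlt]
  | succ p ih =>
    intro N j
    induction j with
    | zero => simp
    | succ j ihj =>
      have e1 : ∀ a ∈ Finset.range (j+2),
          (-1:ℚ)^a * ((N+(p+1)+1).choose a) * (((p+1) + (j+1) - a).choose (p+1))
          = (-1:ℚ)^a * ((N+(p+1)+1).choose a) * (((p+1) + j - a).choose (p+1))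
            + (-1:ℚ)^a * (((N+1)+p+1).choose a) * ((p + (j+1) - a).choose p) := by
        intro a ha
        have haj : a ≤ j + 1 := by simpa [Nat.lt_succ_iff] using Finset.mem_range.mp ha
        have h1 : (p+1) + (j+1) - a = ((p+1) + j - a) + 1 := by omega
        have h2 : p + (j+1) - a = (p+1) + j - a := by omega
        have h3 : N + (p+1) + 1 = (N+1) + p + 1 := by ring
        rw [h1, h2, h3]
        have hp : (((p+1)+j-a+1).choose (p+1) : ℚ)
            = ((p+1)+j-a).choose p + ((p+1)+j-a).choose (p+1) := by
          exact_mod_cast congrArg Nat.cast (Nat.choose_succ_succ ((p+1)+j-a) p)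
        rw [hp]; ring
      rw [Finset.sum_congr rfl e1, Finset.sum_add_distrib, ih (N+1) (j+1)]
      have e2 : ∑ a ∈ Finset.range (j+2),
          (-1:ℚ)^a * ((N+(p+1)+1).choose a) * (((p+1) + j - a).choose (p+1))
          = (-1)^j * (N.choose j) := by
        rw [Finset.sum_range_succ]
        have hz : ((p+1) + j - (j+1)).choose (p+1) = 0 := by
          apply Nat.choose_eq_zero_of_lt; omega
        rw [hz]
        simpa using ihj
      rw [e2]
      have hp : ((N+1).choose (j+1) : ℚ) = N.choose j + N.choose (j+1) := by
        exact_mod_cast congrArg Nat.cast (Nat.choose_succ_succ N j)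
      rw [hp, pow_succ]; ring

lemma inner (m x r : ℕ) :
    ∑ b ∈ Finset.range (m+2), (-1:ℚ)^b * ((m+1).choose b) * ((x + b).choose r) * ((b+1-1 : ℕ) : ℚ)
      = (-1)^(m+1) * (m+1) * (if m ≤ r then (((x+1).choose (r-m)) : ℚ) else 0) := by
  simp only [Nat.add_sub_cancel]

  rw [Finset.sum_range_succ'
    (fun b => (-1:ℚ)^b * ((m+1).choose b) * ((x + b).choose r) * b) (m+1)]
  have e1 : ∀ b ∈ Finset.range (m+1),
      (-1:ℚ)^(b+1) * ((m+1).choose (b+1)) * ((x + (b+1)).choose r) * ((b+1 : ℕ) : ℚ)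
      = -((m:ℚ)+1) * ((-1:ℚ)^b * (m.choose b) * (((x+1) + b).choose r)) := by
    intro b _
    have key : ((m+1).choose (b+1) : ℚ) * (b+1) = (m+1) * (m.choose b) := by
      exact_mod_cast congrArg Nat.cast (Nat.add_one_mul_choose_eq m b).symm
    have hx : x + (b+1) = (x+1) + b := by ring
    rw [hx, pow_succ]
    push_cast
    calc (-1:ℚ)^b * -1 * ((m+1).choose (b+1)) * (((x+1) + b).choose r) * (b+1)
        = -((-1:ℚ)^b * (((x+1) + b).choose r)) * (((m+1).choose (b+1) : ℚ) * (b+1)) := by ring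
      _ = -((-1:ℚ)^b * (((x+1) + b).choose r)) * ((m+1) * (m.choose b)) := by rw [key]
      _ = -((m:ℚ)+1) * ((-1:ℚ)^b * (m.choose b) * (((x+1) + b).choose r)) := by ring
  rw [Finset.sum_congr rfl e1, ← Finset.mul_sum, sumB r m (x+1)]
  simp [pow_succ]
  ring

lemma C_natCast_s4 (x y : ℕ) : C (x:ℤ) (y:ℤ) = (x.choose y : ℤ) := by
  simp [C]


/-- For `k ≥ 0`, `l ≤ −2`:
`∑_{a=0}^{k−2} ∑_{b=0}^{−l+1} (−1)^{a+l−b} C(2k,a) C(−l+1,b) C(k−a−l+b−1, k−2−a) b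
  = (−l+1)((−1)^{k+l+1} C(2k+2l−3, k+l−1) − δ_{k+l,1})`. -/
theorem stmt4 (k : ℕ) (l : ℤ) (hl : l ≤ -2) :
    ∑ a ∈ Finset.range (k - 1), ∑ b ∈ Finset.range (-l + 2).toNat,
        (-1 : ℚ) ^ ((a : ℤ) + l - b) *
          (C (2 * k) a * C (-l + 1) b * C ((k : ℤ) - a - l + b - 1) ((k : ℤ) - 2 - a) : ℤ) *
          (b : ℚ) =
      (-l + 1 : ℚ) *
        ((-1 : ℚ) ^ ((k : ℤ) + l + 1) * (C (2 * k + 2 * l - 3) ((k : ℤ) + l - 1) : ℤ) -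
          (if (k : ℤ) + l = 1 then 1 else 0)) := by
  obtain ⟨M, hM, hM2⟩ : ∃ M : ℕ, (M:ℤ) = -l ∧ 2 ≤ M :=
    ⟨(-l).toNat, by omega, by omega⟩
  -- RHS zero when k + l ≤ 0
  by_cases hk1 : k ≤ 1
  · -- empty outer range
    have h0 : k - 1 = 0 := by omega
    rw [h0]
    have hC0 : C (2 * (k:ℤ) + 2 * l - 3) ((k : ℤ) + l - 1) = 0 := by
      rw [C, if_neg (by omega : ¬ (0:ℤ) ≤ 2 * (k:ℤ) + 2 * l - 3),
        if_neg (by omega : ¬ (0:ℤ) ≤ (k:ℤ) + l - 1),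
        if_neg (by omega : ¬ ((k:ℤ) + l - 1 ≤ 2 * (k:ℤ) + 2 * l - 3))]
    rw [hC0, if_neg (by omega : ¬ ((k:ℤ) + l = 1))]
    simp
  · obtain ⟨K, rfl⟩ : ∃ K, k = K + 2 := ⟨k - 2, by omega⟩
    have hrange2 : (-l + 2).toNat = M + 2 := by omega
    have hrange1 : K + 2 - 1 = K + 1 := by omega
    rw [hrange1, hrange2]
    have step1 : ∀ a ∈ Finset.range (K+1),
        (∑ b ∈ Finset.range (M+2),
          (-1 : ℚ) ^ ((a : ℤ) + l - b) *
            (C (2 * ((K+2:ℕ):ℤ)) a * C (-l + 1) b *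
              C (((K+2:ℕ) : ℤ) - a - l + b - 1) (((K+2:ℕ) : ℤ) - 2 - a) : ℤ) * (b : ℚ))
        = -((M:ℚ)+1) * ((-1:ℚ)^a * ((2*(K+2)).choose a))
            * (if M ≤ K - a then (((K-a) + M + 2).choose (K - a - M) : ℚ) else 0) := by
      intro a ha
      have haK : a ≤ K := by simpa [Nat.lt_succ_iff] using Finset.mem_range.mp ha
      set r := K - a with hrdef
      have hr : (r:ℤ) = (K:ℤ) - a := by omega
      have e : ∀ b ∈ Finset.range (M+2),
          (-1 : ℚ) ^ ((a : ℤ) + l - b) *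
            (C (2 * ((K+2:ℕ):ℤ)) a * C (-l + 1) b *
              C (((K+2:ℕ) : ℤ) - a - l + b - 1) (((K+2:ℕ) : ℤ) - 2 - a) : ℤ) * (b : ℚ)
          = ((-1:ℚ)^(a+1) * (-1:ℚ)^(M+1) * ((2*(K+2)).choose a))
            * ((-1:ℚ)^b * ((M+1).choose b) * (((r+M+1) + b).choose r) * ((b+1-1 : ℕ):ℚ)) := by
        intro b hb
        have h1 : (a:ℤ) + l - b = ((a+1:ℕ):ℤ) - ((M+1+b:ℕ):ℤ) := by push_cast; omega
        have h2 : (2 * ((K+2:ℕ):ℤ)) = ((2*(K+2):ℕ):ℤ) := by push_cast; ring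
        have h3 : -l + 1 = ((M+1:ℕ):ℤ) := by omega
        have h4 : ((K+2:ℕ):ℤ) - a - l + b - 1 = ((r + M + 1 + b : ℕ):ℤ) := by
          push_cast; omega
        have h5 : ((K+2:ℕ):ℤ) - 2 - a = ((r:ℕ):ℤ) := by push_cast; omega
        rw [h1, negone_zpow_sub, h2, h3, h4, h5, C_natCast_s4, C_natCast_s4, C_natCast_s4]
        have h6 : r + M + 1 + b = (r + M + 1) + b := by ring
        have h7 : b + 1 - 1 = b := by omega
        rw [h6, h7, pow_add ((-1:ℚ)) (M+1) b]
        push_cast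
        ring
      rw [Finset.sum_congr rfl e, ← Finset.mul_sum, inner M (r+M+1) r]
      have hsq : ((-1:ℚ))^(M+1) * ((-1:ℚ))^(M+1) = 1 := by
        rw [← pow_add]
        exact Even.neg_one_pow ⟨M+1, by ring⟩
      have h8 : r + M + 1 + 1 = r + M + 2 := by ring
      rw [h8]
      set Φ := (if M ≤ r then ((r + M + 2).choose (r - M) : ℚ) else 0) with hΦ
      calc ((-1:ℚ)^(a+1) * (-1:ℚ)^(M+1) * ((2*(K+2)).choose a))
            * ((-1:ℚ)^(M+1) * ((M:ℚ)+1) * Φ)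
          = (((-1:ℚ))^(M+1) * ((-1:ℚ))^(M+1)) * ((-1:ℚ)^(a+1) * ((2*(K+2)).choose a) * (((M:ℚ)+1) * Φ)) := by ring
        _ = (-1:ℚ)^(a+1) * ((2*(K+2)).choose a) * (((M:ℚ)+1) * Φ) := by rw [hsq, one_mul]
        _ = -((M:ℚ)+1) * ((-1:ℚ)^a * ((2*(K+2)).choose a)) * Φ := by rw [pow_succ]; ring
    rw [Finset.sum_congr rfl step1]
    by_cases hKM : K < M
    · -- all terms vanish; RHS is 0
      rw [Finset.sum_eq_zero (fun a ha => by
        rw [if_neg (by omega : ¬ M ≤ K - a), mul_zero])]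
      by_cases hδ : (K:ℤ) + 2 + l = 1
      · have hKl : K = M - 1 := by omega
        have hn : 2 * ((K+2:ℕ):ℤ) + 2 * l - 3 = -1 := by push_cast; omega
        have hk' : ((K+2:ℕ):ℤ) + l - 1 = 0 := by push_cast; omega
        have hexp : ((K+2:ℕ):ℤ) + l + 1 = (2:ℤ) := by push_cast; omega
        have hδ' : ((K+2:ℕ):ℤ) + l = 1 := by push_cast; omega
        rw [show (2 * ((K+2:ℕ):ℤ) + 2 * l - 3) = -1 from hn, hk', hexp,
          if_pos hδ']
        have : C (-1) 0 = 1 := by decide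
        rw [this]
        norm_num
      · have hC0 : C (2 * ((K+2:ℕ):ℤ) + 2 * l - 3) (((K+2:ℕ):ℤ) + l - 1) = 0 := by
          rw [C, if_neg (by push_cast; omega : ¬ (0:ℤ) ≤ 2 * ((K+2:ℕ):ℤ) + 2 * l - 3),
            if_neg (by push_cast; omega : ¬ (0:ℤ) ≤ ((K+2:ℕ):ℤ) + l - 1),
            if_neg (by push_cast; omega : ¬ (((K+2:ℕ):ℤ) + l - 1 ≤ 2 * ((K+2:ℕ):ℤ) + 2 * l - 3))]
        rw [hC0, if_neg (by push_cast; omega : ¬ (((K+2:ℕ):ℤ) + l = 1))]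
        simp
    · -- main case: K ≥ M
      set j := K - M with hjdef
      have hjK : j ≤ K := by omega
      have hsub : ∑ a ∈ Finset.range (K+1),
          (-((M:ℚ)+1) * ((-1:ℚ)^a * ((2*(K+2)).choose a))
            * (if M ≤ K - a then (((K-a) + M + 2).choose (K - a - M) : ℚ) else 0))
          = ∑ a ∈ Finset.range (j+1),
          (-((M:ℚ)+1) * ((-1:ℚ)^a * ((2*(K+2)).choose a))
            * (if M ≤ K - a then (((K-a) + M + 2).choose (K - a - M) : ℚ) else 0)) := by
        refine (Finset.sum_subset (by intro x hx; simp only [Finset.mem_range] at *; omega) ?_).symm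
        intro a ha hna
        simp only [Finset.mem_range] at ha hna
        rw [if_neg (by omega : ¬ M ≤ K - a), mul_zero]
      rw [hsub]
      have e2 : ∀ a ∈ Finset.range (j+1),
          (-((M:ℚ)+1) * ((-1:ℚ)^a * ((2*(K+2)).choose a))
            * (if M ≤ K - a then (((K-a) + M + 2).choose (K - a - M) : ℚ) else 0))
          = -((M:ℚ)+1) * ((-1:ℚ)^a * (((2*j+1)+(2*M+2)+1).choose a) * (((2*M+2) + j - a).choose (2*M+2))) := by
        intro a ha
        have haj : a ≤ j := by simpa [Nat.lt_succ_iff] using Finset.mem_range.mp ha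
        rw [if_pos (by omega : M ≤ K - a)]
        have hb1 : (K - a) + M + 2 = (2*M+2) + j - a := by omega
        have hb2 : K - a - M = ((2*M+2) + j - a) - (2*M+2) := by omega
        have hb3 : 2*(K+2) = (2*j+1)+(2*M+2)+1 := by omega
        rw [hb1, hb2, hb3, Nat.choose_symm (by omega : 2*M+2 ≤ (2*M+2) + j - a)]
        ring
      rw [Finset.sum_congr rfl e2, ← Finset.mul_sum, sumC (2*M+2) (2*j+1) j]
      -- now the RHS
      have hδ : ¬ (((K+2:ℕ):ℤ) + l = 1) := by push_cast; omega
      have hexp : ((K+2:ℕ):ℤ) + l + 1 = ((j+3:ℕ):ℤ) := by push_cast; omega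
      have hn : 2 * ((K+2:ℕ):ℤ) + 2 * l - 3 = ((2*j+1:ℕ):ℤ) := by push_cast; omega
      have hk' : ((K+2:ℕ):ℤ) + l - 1 = ((j+1:ℕ):ℤ) := by push_cast; omega
      rw [if_neg hδ, hexp, hn, hk', C_natCast_s4, zpow_natCast]
      have hsym : (2*j+1).choose (j+1) = (2*j+1).choose j := by
        rw [← Nat.choose_symm (by omega : j+1 ≤ 2*j+1)]
        congr 1
        omega
      rw [hsym, show l = -(M:ℤ) from by omega]
      push_cast
      ring
end

section
/- For integers k ≥ 0 and l ≤ −2, ∑_{a=k}^{2k} ∑_{b=0}^{−l+1} (−1)^a C(2k,a)·C(−l+1,b)·C(a−k+1, −l+b+1) = (−1)^{l+k}·C(2k+2l−3, l+k). -/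
/-- Generalized binomial coefficient with integer top, natural bottom. -/
def Bi (n : ℤ) (r : ℕ) : ℤ :=
  if 0 ≤ n then (n.toNat.choose r : ℤ) else (-1) ^ r * (((r : ℤ) - n - 1).toNat.choose r : ℤ)

lemma Bi_nat (n r : ℕ) : Bi n r = (n.choose r : ℤ) := by simp [Bi]

lemma Bi_zero (n : ℤ) : Bi n 0 = 1 := by
  unfold Bi; split <;> simp

lemma C_natcast (n r : ℕ) : C (n : ℤ) (r : ℤ) = (n.choose r : ℤ) := by simp [C]

lemma C_eq_Bi (n : ℤ) (r : ℕ) : C n (r : ℤ) = Bi n r := by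
  unfold C Bi
  by_cases h : 0 ≤ n <;> simp [h]

lemma Bi_pascal (n : ℤ) (r : ℕ) : Bi n (r+1) = Bi (n-1) (r+1) + Bi (n-1) r := by
  rcases lt_trichotomy n 0 with hn | rfl | hn
  · have h1 : ¬ (0 ≤ n) := by omega
    have h2 : ¬ (0 ≤ n - 1) := by omega
    obtain ⟨s, hs⟩ : ∃ s : ℕ, n = -((s : ℤ) + 1) := ⟨(-n-1).toNat, by omega⟩
    simp only [Bi, if_neg h1, if_neg h2]
    have e1 : (((r:ℕ)+1 : ℤ) - n - 1).toNat = r + s + 1 := by omega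
    have e2 : (((r:ℕ)+1 : ℤ) - (n-1) - 1).toNat = r + s + 2 := by omega
    have e3 : ((r : ℤ) - (n-1) - 1).toNat = r + s + 1 := by omega
    push_cast
    rw [e1, e2, e3]
    have hp : (r + s + 2).choose (r+1) = (r+s+1).choose r + (r+s+1).choose (r+1) :=
      Nat.choose_succ_succ' (r+s+1) r ▸ by rw [show r+s+2 = (r+s+1)+1 by omega]
    rw [hp]
    push_cast
    ring
  · simp only [Bi]
    rw [if_pos le_rfl, if_neg (by omega : ¬ ((0:ℤ) ≤ 0 - 1)), if_neg (by omega : ¬ ((0:ℤ) ≤ 0 - 1))]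
    have e2 : (((r+1 : ℕ) : ℤ) - (0 - 1) - 1).toNat = r + 1 := by omega
    have e3 : (((r:ℕ) : ℤ) - (0 - 1) - 1).toNat = r := by omega
    rw [e2, e3]
    simp [Nat.choose_self, Nat.choose_eq_zero_of_lt (Nat.succ_pos r)]
    rw [pow_succ]
    ring
  · obtain ⟨s, hs⟩ : ∃ s : ℕ, n = (s : ℤ) + 1 := ⟨(n-1).toNat, by omega⟩
    have h1 : (0:ℤ) ≤ n := by omega
    have h2 : (0:ℤ) ≤ n - 1 := by omega
    simp only [Bi, if_pos h1, if_pos h2]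
    have e1 : n.toNat = s + 1 := by omega
    have e2 : (n-1).toNat = s := by omega
    rw [e1, e2, Nat.choose_succ_succ' s r]
    push_cast; ring

/-- Partial alternating sum of binomial coefficients. -/
lemma alt_sum (n j : ℕ) (hn : 1 ≤ n) (hj : 1 ≤ j) (T : ℕ) :
    ∑ i ∈ Finset.range T, (-1:ℤ)^i * (n.choose (j+i)) =
      ((n-1).choose (j-1) : ℤ) - (-1)^T * ((n-1).choose (j + T - 1)) := by
  induction T with
  | zero => simp
  | succ T ihT =>
    rw [Finset.sum_range_succ, ihT]
    have hp : n.choose (j+T) = (n-1).choose (j+T-1) + (n-1).choose (j+T) := by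
      have h1 : n = (n-1) + 1 := by omega
      have h2 : j + T = (j+T-1) + 1 := by omega
      rw [h1, h2, Nat.choose_succ_succ']
      congr 1 <;> omega
    rw [hp]
    have h3 : j + (T+1) - 1 = j + T := by omega
    rw [h3]
    push_cast
    rw [pow_succ]
    ring

lemma Hsum_eq (q : ℕ) : ∀ k p : ℕ, p ≤ k →
    ∑ i ∈ Finset.range (k+1), (-1:ℤ)^i * ((2*k).choose (k+p+i)) * ((q+i).choose q)
      = Bi (2*(k:ℤ) - q - 1) (k - p) := by
  induction q with
  | zero =>
    intro k p hpk
    simp only [Nat.zero_add, Nat.choose_zero_right, Nat.cast_one, mul_one]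
    rcases Nat.eq_zero_or_pos k with rfl | hk
    · interval_cases p
      simp [Bi]
    · have := alt_sum (2*k) (k+p) (by omega) (by omega) (k+1)
      rw [this]
      have hz : (2*k-1).choose (k+p+(k+1)-1) = 0 :=
        Nat.choose_eq_zero_of_lt (by omega)
      rw [hz]
      have hs : (2*k-1).choose (k+p-1) = (2*k-1).choose (k-p) := by
        have := Nat.choose_symm (n := 2*k-1) (k := k+p-1) (by omega)
        rw [show 2*k-1-(k+p-1) = k - p by omega] at this
        exact this.symm
      rw [hs]
      have hBi : Bi (2*(k:ℤ) - ((0:ℕ):ℤ) - 1) (k-p) = ((2*k-1).choose (k-p) : ℤ) := by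
        rw [show 2*(k:ℤ) - ((0:ℕ):ℤ) - 1 = ((2*k-1 : ℕ):ℤ) by push_cast; omega, Bi_nat]
      rw [hBi]
      push_cast
      ring
  | succ q ih =>
    intro k p hpk
    suffices H : ∀ d p, p ≤ k → k - p = d →
        ∑ i ∈ Finset.range (k+1), (-1:ℤ)^i * ((2*k).choose (k+p+i)) * (((q+1)+i).choose (q+1))
          = Bi (2*(k:ℤ) - (q+1) - 1) (k - p) from H (k-p) p hpk rfl
    intro d
    induction d with
    | zero =>
      intro p hpk hd
      have hpk' : p = k := by omega
      subst hpk'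
      rw [Finset.sum_eq_single 0]
      · simp [show p+p = 2*p from (two_mul p).symm, Nat.choose_self, Bi_zero, Nat.sub_self]
      · intro i _ hi
        have : (2*p).choose (p+p+i) = 0 := Nat.choose_eq_zero_of_lt (by omega)
        rw [this]; push_cast; ring
      · intro h; simp at h
    | succ d ihd =>
      intro p hpk hd
      have hplt : p < k := by omega
      have split : ∀ i : ℕ, (((q+1)+i).choose (q+1) : ℤ)
          = ((q+i).choose q : ℤ) + ((q+i).choose (q+1) : ℤ) := by
        intro i
        rw [show (q+1)+i = (q+i)+1 by omega, Nat.choose_succ_succ' (q+i) q]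
        push_cast; ring
      have e1 : ∑ i ∈ Finset.range (k+1),
            (-1:ℤ)^i * ((2*k).choose (k+p+i)) * (((q+1)+i).choose (q+1))
          = (∑ i ∈ Finset.range (k+1), (-1:ℤ)^i * ((2*k).choose (k+p+i)) * ((q+i).choose q))
            + ∑ i ∈ Finset.range (k+1), (-1:ℤ)^i * ((2*k).choose (k+p+i)) * ((q+i).choose (q+1)) := by
        rw [← Finset.sum_add_distrib]
        refine Finset.sum_congr rfl fun i _ => ?_
        rw [split i]; ring
      have e2 : ∑ i ∈ Finset.range (k+1), (-1:ℤ)^i * ((2*k).choose (k+p+i)) * ((q+i).choose (q+1))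
          = - ∑ i ∈ Finset.range (k+1),
              (-1:ℤ)^i * ((2*k).choose (k+(p+1)+i)) * (((q+1)+i).choose (q+1)) := by
        rw [Finset.sum_range_succ'
          (fun i => (-1:ℤ)^i * ((2*k).choose (k+p+i)) * ((q+i).choose (q+1))) k]
        rw [Finset.sum_range_succ
          (fun i => (-1:ℤ)^i * ((2*k).choose (k+(p+1)+i)) * (((q+1)+i).choose (q+1))) k]
        have hz1 : (q+0).choose (q+1) = 0 := by
          simpa using Nat.choose_succ_self q
        have hz2 : (2*k).choose (k+(p+1)+k) = 0 := Nat.choose_eq_zero_of_lt (by omega)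
        rw [hz1, hz2]
        simp only [Nat.cast_zero, mul_zero, zero_mul, add_zero]
        rw [← Finset.sum_neg_distrib]
        refine Finset.sum_congr rfl fun i _ => ?_
        rw [show k+p+(i+1) = k+(p+1)+i by omega, show q+(i+1) = (q+1)+i by omega, pow_succ]
        ring
      rw [e1, e2, ih k p hpk, ihd (p+1) (by omega) (by omega)]
      have hr : k - p = (k - (p+1)) + 1 := by omega
      rw [hr, Bi_pascal (2*(k:ℤ) - q - 1) (k - (p+1))]
      have : 2*(k:ℤ) - q - 1 - 1 = 2*(k:ℤ) - (q+1) - 1 := by push_cast; ring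
      rw [this]
      push_cast
      ring

lemma vand (n m : ℕ) :
    ∑ b ∈ Finset.range (m+4), (m+3).choose b * n.choose (m+3+b)
      = ((m+3) + n).choose (2*m+6) := by
  rw [Nat.add_choose_eq, Finset.Nat.sum_antidiagonal_eq_sum_range_succ_mk]
  simp only
  rw [show (2*m+6).succ = (m+4) + (m+3) by omega]
  conv_rhs => rw [Finset.sum_range_add]
  have h2 : ∑ i ∈ Finset.range (m+3),
      (m+3).choose (m+4+i) * n.choose (2*m+6 - (m+4+i)) = 0 :=
    Finset.sum_eq_zero fun i _ => by
      rw [Nat.choose_eq_zero_of_lt (by omega)]; ring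
  rw [h2, add_zero, ← Finset.sum_range_reflect]
  refine Finset.sum_congr rfl fun b hb => ?_
  have hb' : b ≤ m + 3 := by simpa [Nat.lt_succ_iff] using (Finset.mem_range.mp hb)
  have e1 : m + 4 - 1 - b = m + 3 - b := by omega
  rw [e1]
  have e2 : m + 3 + (m + 3 - b) = 2*m+6 - b := by omega
  rw [e2, Nat.choose_symm hb']

lemma innerSumC (k m a : ℕ) (h1 : k ≤ a) :
    ∑ b ∈ Finset.range (m+4),
      C (2*(k:ℤ)) (a:ℤ) * C (-(-(m:ℤ)-2)+1) (b:ℤ) * C ((a:ℤ) - (k:ℤ) + 1) (-(-(m:ℤ)-2)+(b:ℤ)+1)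
      = ((2*k).choose a * ((a - k + (m+4)).choose (2*m+6)) : ℤ) := by
  have step : ∀ b ∈ Finset.range (m+4),
      C (2*(k:ℤ)) (a:ℤ) * C (-(-(m:ℤ)-2)+1) (b:ℤ) * C ((a:ℤ) - (k:ℤ) + 1) (-(-(m:ℤ)-2)+(b:ℤ)+1)
      = ((2*k).choose a : ℤ) * (((m+3).choose b * (a-k+1).choose (m+3+b) : ℕ) : ℤ) := by
    intro b _
    have c1 : C (2*(k:ℤ)) (a:ℤ) = ((2*k).choose a : ℤ) := by
      rw [show 2*(k:ℤ) = ((2*k:ℕ):ℤ) by omega, C_natcast]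
    have c2 : C (-(-(m:ℤ)-2)+1) (b:ℤ) = ((m+3).choose b : ℤ) := by
      rw [show -(-(m:ℤ)-2)+1 = ((m+3:ℕ):ℤ) by omega, C_natcast]
    have c3 : C ((a:ℤ) - (k:ℤ) + 1) (-(-(m:ℤ)-2)+(b:ℤ)+1) = ((a-k+1).choose (m+3+b) : ℤ) := by
      rw [show (a:ℤ) - (k:ℤ) + 1 = ((a-k+1:ℕ):ℤ) by omega,
        show -(-(m:ℤ)-2)+(b:ℤ)+1 = ((m+3+b:ℕ):ℤ) by omega, C_natcast]
    rw [c1, c2, c3]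
    push_cast
    ring
  rw [Finset.sum_congr rfl step, ← Finset.mul_sum, ← Nat.cast_sum, vand (a-k+1) m,
    show (m+3) + (a-k+1) = a - k + (m+4) by omega]

lemma main_int (k m : ℕ) :
    ∑ a ∈ Finset.Icc k (2*k),
        (-1:ℤ)^a * (((2*k).choose a * ((a - k + (m+4)).choose (2*m+6)) : ℕ) : ℤ)
      = (-1)^(k+m) * C (2*(k:ℤ) + 2*(-(m:ℤ) - 2) - 3) (-(m:ℤ) - 2 + k) := by
  by_cases hk : m + 2 ≤ k
  · -- main case
    rw [← Finset.Ico_add_one_right_eq_Icc, Finset.sum_Ico_eq_sum_range]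
    rw [show 2*k+1-k = k+1 by omega]
    have step1 : ∀ i ∈ Finset.range (k+1),
        (-1:ℤ)^(k+i) * (((2*k).choose (k+i) * ((k+i - k + (m+4)).choose (2*m+6)) : ℕ) : ℤ)
        = (-1:ℤ)^(k+i) * ((2*k).choose (k+i)) * ((i + (m+4)).choose (2*m+6)) := by
      intro i _
      rw [show k+i-k = i by omega]
      push_cast; ring
    rw [Finset.sum_congr rfl step1]
    rw [show k+1 = (m+2) + (k-m-1) by omega, Finset.sum_range_add]
    have hz1 : ∑ i ∈ Finset.range (m+2),
        (-1:ℤ)^(k+i) * ((2*k).choose (k+i)) * ((i + (m+4)).choose (2*m+6)) = 0 :=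
      Finset.sum_eq_zero fun i hi => by
        have : (i + (m+4)).choose (2*m+6) = 0 :=
          Nat.choose_eq_zero_of_lt (by have := Finset.mem_range.mp hi; omega)
        rw [this]; push_cast; ring
    rw [hz1, zero_add]
    have step2 : ∀ j ∈ Finset.range (k-m-1),
        (-1:ℤ)^(k+(m+2+j)) * ((2*k).choose (k+(m+2+j))) * (((m+2+j) + (m+4)).choose (2*m+6))
        = (-1:ℤ)^(k+m) * ((-1:ℤ)^j * ((2*k).choose (k+(m+2)+j)) * (((2*m+6)+j).choose (2*m+6))) := by
      intro j _
      rw [show k+(m+2+j) = (k+m) + (2 + j) by omega, show (m+2+j)+(m+4) = (2*m+6)+j by omega,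
        show k+(m+2)+j = (k+m) + (2+j) by omega]
      rw [pow_add, pow_add]
      push_cast
      ring_nf
    rw [Finset.sum_congr rfl step2, ← Finset.mul_sum]
    have pad : ∑ j ∈ Finset.range (k-m-1),
        (-1:ℤ)^j * ((2*k).choose (k+(m+2)+j)) * (((2*m+6)+j).choose (2*m+6))
        = ∑ j ∈ Finset.range (k+1),
        (-1:ℤ)^j * ((2*k).choose (k+(m+2)+j)) * (((2*m+6)+j).choose (2*m+6)) := by
      refine Finset.sum_subset (Finset.range_subset_range.mpr (by omega)) fun j _ hj => ?_
      have hj' : k - m - 1 ≤ j := by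
        by_contra h
        exact hj (Finset.mem_range.mpr (by omega))
      have : (2*k).choose (k+(m+2)+j) = 0 := Nat.choose_eq_zero_of_lt (by omega)
      rw [this]; push_cast; ring
    rw [show (∑ j ∈ Finset.range (k-m-1),
        (-1:ℤ)^j * ((2*k).choose (k+(m+2)+j)) * (((2*m+6)+j).choose (2*m+6))) =
        ∑ j ∈ Finset.range (k+1),
        (-1:ℤ)^j * ((2*k).choose (k+(m+2)+j)) * (((2*m+6)+j).choose (2*m+6)) from pad]
    rw [Hsum_eq (2*m+6) k (m+2) hk]
    have harg : -(m:ℤ) - 2 + k = ((k - (m+2) : ℕ) : ℤ) := by omega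
    rw [harg, C_eq_Bi]
    have harg2 : 2*(k:ℤ) + 2*(-(m:ℤ) - 2) - 3 = 2*(k:ℤ) - ((2*m+6 : ℕ):ℤ) - 1 := by
      push_cast; ring
    rw [harg2]
  · -- degenerate case: both sides vanish
    push_neg at hk
    have hL : ∑ a ∈ Finset.Icc k (2*k),
        (-1:ℤ)^a * (((2*k).choose a * ((a - k + (m+4)).choose (2*m+6)) : ℕ) : ℤ) = 0 :=
      Finset.sum_eq_zero fun a ha => by
        obtain ⟨h1, h2⟩ := Finset.mem_Icc.mp ha
        have : (a - k + (m+4)).choose (2*m+6) = 0 := Nat.choose_eq_zero_of_lt (by omega)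
        rw [this]
        push_cast; ring
    rw [hL]
    have h1 : ¬ (0 ≤ 2*(k:ℤ) + 2*(-(m:ℤ) - 2) - 3) := by omega
    have h2 : ¬ (0 ≤ -(m:ℤ) - 2 + k) := by omega
    have h3 : ¬ (-(m:ℤ) - 2 + k ≤ 2*(k:ℤ) + 2*(-(m:ℤ) - 2) - 3) := by omega
    rw [C, if_neg h1, if_neg h2, if_neg h3, mul_zero]

/-- For `k ≥ 0`, `l ≤ −2`:
`∑_{a=k}^{2k} ∑_{b=0}^{−l+1} (−1)^a C(2k,a) C(−l+1,b) C(a−k+1, −l+b+1)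
  = (−1)^{l+k} C(2k+2l−3, l+k)`. -/
theorem stmt12 (k : ℕ) (l : ℤ) (hl : l ≤ -2) :
    ∑ a ∈ Finset.Icc k (2 * k), ∑ b ∈ Finset.range (-l + 2).toNat,
        (-1 : ℚ) ^ a *
          (C (2 * k) a * C (-l + 1) b * C ((a : ℤ) - k + 1) (-l + b + 1) : ℤ) =
      (-1 : ℚ) ^ (l + (k : ℤ)) * (C (2 * k + 2 * l - 3) (l + (k : ℤ)) : ℤ) := by
  obtain ⟨m, rfl⟩ : ∃ m : ℕ, l = -(m : ℤ) - 2 := ⟨(-l-2).toNat, by omega⟩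
  have hrange : (-(-(m:ℤ) - 2) + 2).toNat = m + 4 := by omega
  rw [hrange]
  have hstep : ∀ a ∈ Finset.Icc k (2*k),
      ∑ b ∈ Finset.range (m+4),
        (-1 : ℚ) ^ a *
          (C (2 * (k:ℤ)) (a:ℤ) * C (-(-(m:ℤ)-2) + 1) (b:ℤ)
            * C ((a : ℤ) - (k:ℤ) + 1) (-(-(m:ℤ)-2) + (b:ℤ) + 1) : ℤ)
      = (-1 : ℚ) ^ a * (((((2*k).choose a * ((a - k + (m+4)).choose (2*m+6)) : ℕ)) : ℤ) : ℚ) := by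
    intro a ha
    obtain ⟨h1, h2⟩ := Finset.mem_Icc.mp ha
    rw [← Finset.mul_sum, ← Int.cast_sum, innerSumC k m a h1]
    push_cast
    ring
  rw [Finset.sum_congr rfl hstep]
  have hcast : ∑ a ∈ Finset.Icc k (2*k),
      (-1 : ℚ) ^ a * (((((2*k).choose a * ((a - k + (m+4)).choose (2*m+6)) : ℕ)) : ℤ) : ℚ)
      = ((∑ a ∈ Finset.Icc k (2*k),
          (-1:ℤ)^a * (((2*k).choose a * ((a - k + (m+4)).choose (2*m+6)) : ℕ) : ℤ) : ℤ) : ℚ) := by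
    rw [Int.cast_sum]
    refine Finset.sum_congr rfl fun a _ => ?_
    push_cast
    ring
  rw [hcast, main_int k m]
  have hsign : (-1:ℚ)^((-(m:ℤ) - 2) + k) = (-1:ℚ)^(k+m) := by
    have h2 : ((-(m:ℤ) - 2) + k) = ((k+m : ℕ):ℤ) - 2*((m:ℤ)+1) := by push_cast; ring
    rw [h2, zpow_sub₀ (by norm_num : (-1:ℚ) ≠ 0), zpow_natCast]
    have h3 : (-1:ℚ)^(2*((m:ℤ)+1)) = 1 := by
      rw [zpow_mul]
      norm_num
    rw [h3, div_one]
  rw [show (-(m:ℤ) - 2 + (k:ℤ)) = ((-(m:ℤ) - 2) + k) from rfl, hsign]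
  push_cast
  ring
end

section
/- Let R = ℂ[t, t^{−1}, u] / (u^2 − t^2 − 4t) and define D = (t+2)∂/∂u + u∂/∂t, which induces a well-defined derivation of R. Then with d_n = t^n u D and e_n = t^n D (n ∈ ℤ), in the Lie algebra Der(R) one has [e_m, e_n] = (n−m) d_{m+n−1}. -/
set_option synthInstance.maxHeartbeats 1000000
set_option maxHeartbeats 1000000

open MvPolynomial in
/-- `R = ℂ[t, t⁻¹, u] / (u² − t² − 4t)`, modelled as `ℂ[x₀,x₁,x₂]` modulo the
ideal generated by `x₀x₁ − 1` (making `x₀ = t` invertible with inverse `x₁`)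
and `x₂² − x₀² − 4x₀`. -/
noncomputable abbrev R3 : Type :=
  MvPolynomial (Fin 3) ℂ ⧸
    Ideal.span {(X 0 * X 1 - 1 : MvPolynomial (Fin 3) ℂ), X 2 ^ 2 - X 0 ^ 2 - 4 * X 0}

open MvPolynomial in
/-- the class of `t` in `R`. -/
noncomputable def tR : R3 := Ideal.Quotient.mk _ (X 0)

open MvPolynomial in
/-- the class of `t⁻¹` in `R`. -/
noncomputable def tinv : R3 := Ideal.Quotient.mk _ (X 1)

open MvPolynomial in
/-- the class of `u` in `R`. -/
noncomputable def uR : R3 := Ideal.Quotient.mk _ (X 2)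

/-- integer powers `tⁿ` of the invertible element `t` of `R`. -/
noncomputable def tpow (n : ℤ) : R3 := if 0 ≤ n then tR ^ n.toNat else tinv ^ (-n).toNat

/-- `eR n = tⁿ D ∈ Der(R)` for a derivation `D`. -/
noncomputable def eR (D : Derivation ℂ R3 R3) (n : ℤ) : Derivation ℂ R3 R3 :=
  tpow n • D

/-- `dR n = tⁿ u D ∈ Der(R)` for a derivation `D`. -/
noncomputable def dR (D : Derivation ℂ R3 R3) (n : ℤ) : Derivation ℂ R3 R3 :=
  (tpow n * uR) • D

/-! Every `eₙ` is a multiple `tⁿ • D` of the single derivation `D`, and for multiples of one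
derivation `⁅a • D, b • D⁆ = (a * D b - b * D a) • D`. Since `t` is a unit with `D t = u`, one has
`D (tⁿ) = n tⁿ⁻¹ u` for all `n ∈ ℤ`, so the bracket collapses to `(n - m) t^(m+n-1) u • D`. -/

namespace Derivation

variable {R A M : Type*} [CommRing R] [CommRing A] [Algebra R A] [AddCommGroup M] [Module A M]
  [Module R M]

theorem leibniz_units_zpow (D : Derivation R A M) (u : Aˣ) (n : ℤ) :
    D ↑(u ^ n) = n • (↑(u ^ (n - 1)) : A) • D u := by
  rw [← Int.cast_smul_eq_zsmul A, smul_smul]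
  induction n using Int.induction_on with
  | zero => simp
  | succ k ih =>
    have h : (u : A) * ↑(u ^ ((k : ℤ) - 1)) = ↑(u ^ (k : ℤ)) := by
      rw [← Units.val_mul]; group
    rw [zpow_add_one, Units.val_mul, leibniz, ih, smul_smul, ← add_smul, add_sub_cancel_right]
    congr 1
    push_cast
    linear_combination (k : A) * h
  | pred k ih =>
    have h₁ : (↑u⁻¹ : A) * ↑(u ^ (-(k : ℤ) - 1)) = ↑(u ^ (-(k : ℤ) - 1 - 1)) := by
      rw [← Units.val_mul]; group
    have h₂ : (↑(u ^ (-(k : ℤ))) : A) * ↑u⁻¹ ^ 2 = ↑(u ^ (-(k : ℤ) - 1 - 1)) := by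
      rw [← Units.val_pow_eq_pow_val, ← Units.val_mul]; group
    rw [zpow_sub_one, Units.val_mul, leibniz, ih, D.leibniz_of_mul_eq_one u.inv_mul, smul_smul,
      smul_smul, ← add_smul]
    congr 1
    push_cast
    linear_combination (-(k : A)) * h₁ - h₂

theorem lie_smul_smul (D : Derivation R A A) (a b : A) :
    ⁅a • D, b • D⁆ = (a * D b - b * D a) • D := by
  ext x
  simp only [commutator_apply, smul_apply, smul_eq_mul, leibniz]
  ring

end Derivation

open MvPolynomial in
theorem tR_mul_tinv : tR * tinv = 1 := by
  rw [tR, tinv, ← map_mul, ← sub_eq_zero, ← map_one (Ideal.Quotient.mk _), ← map_sub,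
    Ideal.Quotient.eq_zero_iff_mem]
  exact Ideal.subset_span (Set.mem_insert _ _)

noncomputable def tUnit : R3ˣ := ⟨tR, tinv, tR_mul_tinv, by rw [mul_comm, tR_mul_tinv]⟩

theorem val_tUnit : (tUnit : R3) = tR := rfl

theorem tpow_eq_val_zpow (n : ℤ) : tpow n = ↑(tUnit ^ n) := by
  rcases le_or_gt 0 n with h | h
  · lift n to ℕ using h
    simp [tpow, tUnit]
  · obtain ⟨k, rfl⟩ : ∃ k : ℕ, n = -k := ⟨(-n).toNat, by omega⟩
    rw [tpow, if_neg h.not_ge, neg_neg, Int.toNat_natCast, zpow_neg, zpow_natCast, ← inv_pow,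
      Units.val_pow_eq_pow_val]
    rfl

theorem stmt14_general (D : Derivation ℂ R3 R3) (hDt : D tR = uR)
    (m n : ℤ) :
    ⁅eR D m, eR D n⁆ = (n - m) • dR D (m + n - 1) := by
  have hmn : (↑(tUnit ^ m) : R3) * ↑(tUnit ^ (n - 1)) = ↑(tUnit ^ (m + n - 1)) := by
    rw [← Units.val_mul]; group
  have hnm : (↑(tUnit ^ n) : R3) * ↑(tUnit ^ (m - 1)) = ↑(tUnit ^ (m + n - 1)) := by
    rw [← Units.val_mul]; group
  rw [eR, eR, dR, tpow_eq_val_zpow, tpow_eq_val_zpow, tpow_eq_val_zpow, Derivation.lie_smul_smul,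
    D.leibniz_units_zpow, D.leibniz_units_zpow, val_tUnit, hDt, ← smul_assoc (n - m)]
  congr 1
  simp only [smul_eq_mul, zsmul_eq_mul]
  push_cast
  linear_combination ((n : R3) * uR) * hmn - ((m : R3) * uR) * hnm

/-- For any derivation `D` of `R` with `D t = u` and `D u = t + 2` (i.e. the
derivation `(t+2)∂ᵤ + u∂ₜ`), one has `[eₘ, eₙ] = (n − m) d_{m+n−1}` in `Der(R)`. -/
theorem stmt14 (D : Derivation ℂ R3 R3) (hDt : D tR = uR) (hDu : D uR = tR + 2)
    (m n : ℤ) :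
    ⁅eR D m, eR D n⁆ = (n - m) • dR D (m + n - 1) :=
  stmt14_general D hDt m n
end

section
/- The map f determined by f(t) = s^{−1}(s−1)^2 and f(u) = s − s^{−1} defines a ℂ-algebra isomorphism from R = ℂ[t,t^{−1},u]/(u^2 − t^2 − 4t) onto S = ℂ[s, s^{−1}, (s−1)^{−1}], with inverse determined by s ↦ (t+2+u)/2 and s^{−1} ↦ (t+2−u)/2. -/
set_option synthInstance.maxHeartbeats 1000000
set_option maxHeartbeats 1000000

open Polynomial in
/-- `S = ℂ[s, s⁻¹, (s−1)⁻¹]`, the localization of `ℂ[s]` at the multiplicative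
set generated by `s` and `s − 1`. -/
noncomputable abbrev S3 : Type :=
  Localization (Submonoid.closure {(X : ℂ[X]), X - 1})

open Polynomial in
/-- the element `s` of `S`. -/
noncomputable def sS : S3 := algebraMap ℂ[X] S3 X

/-!
Write `s'` for `s⁻¹`. In `S`, `t = s'(s-1)²` and `u = s - s'` satisfy `t + 2 = s + s'`, hence
`u² = (t+2)² - 4 = t² + 4t`, and `t` is a unit; so `f` exists. In `R`, put `a = (t+2+u)/2` and
`b = (t+2-u)/2`: then `ab = ((t+2)² - u²)/4 = 1` and `(a-1)² = ta`, so `a` and `a - 1` are units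
and `s ↦ a` defines `g : S → R`. The composites fix the generators: `g(f t) = b(a-1)² = tab = t`,
`g(f u) = a - b = u`, and `f a = (s + s' + s - s')/2 = s`.
-/

section Identities

variable {A : Type*} [CommRing A] {s s' t u c : A}

theorem mul_sub_one_sq_add_two (h : s * s' = 1) : s' * (s - 1) ^ 2 + 2 = s + s' := by
  linear_combination (s - 2) * h

theorem sub_sq_eq_of_mul_eq_one (h : s * s' = 1) :
    (s - s') ^ 2 = (s' * (s - 1) ^ 2) ^ 2 + 4 * (s' * (s - 1) ^ 2) := by
  linear_combination -4 * h - (s + s' + s' * (s - 1) ^ 2 + 2) * mul_sub_one_sq_add_two h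

theorem half_mul_half_eq_one (hc : 2 * c = 1) (hu : u ^ 2 = t ^ 2 + 4 * t) :
    c * (t + 2 + u) * (c * (t + 2 - u)) = 1 := by
  linear_combination (-c ^ 2) * hu + (2 * c + 1) * hc

theorem half_sub_one_sq (hc : 2 * c = 1) (hu : u ^ 2 = t ^ 2 + 4 * t) :
    (c * (t + 2 + u) - 1) ^ 2 = t * (c * (t + 2 + u)) := by
  linear_combination c ^ 2 * hu + (c * t * (t + u + 2) + 2 * c * (t + u) + 2 * c - 1) * hc

end Identities

theorem map_eq_of_mul_eq_one {M N F : Type*} [CommMonoid M] [CommMonoid N] [FunLike F M N]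
    [MonoidHomClass F M N] (f : F) {x y : M} {y' : N} (hxy : x * y = 1) (h : f x * y' = 1) :
    f y = y' :=
  left_inv_eq_right_inv (by rw [← map_mul, mul_comm, hxy, map_one]) h

theorem two_mul_algebraMap_two_inv {A : Type*} [Semiring A] [Algebra ℂ A] :
    2 * algebraMap ℂ A 2⁻¹ = 1 := by
  rw [← map_ofNat (algebraMap ℂ A), ← map_mul, mul_inv_cancel₀ two_ne_zero, map_one]

open Ring

section S3

open Polynomial

noncomputable abbrev sDenoms : Submonoid ℂ[X] := Submonoid.closure {X, X - 1}

theorem isUnit_sS : IsUnit sS :=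
  IsLocalization.map_units (M := sDenoms) S3 ⟨X, Submonoid.subset_closure (by simp)⟩

theorem isUnit_sS_sub_one : IsUnit (sS - 1) := by
  rw [sS, ← map_one (algebraMap ℂ[X] S3), ← map_sub]
  exact IsLocalization.map_units (M := sDenoms) S3 ⟨X - 1, Submonoid.subset_closure (by simp)⟩

noncomputable def tS : S3 := sS⁻¹ʳ * (sS - 1) ^ 2

noncomputable def uS : S3 := sS - sS⁻¹ʳ

theorem isUnit_tS : IsUnit tS := isUnit_sS.ringInverse.mul (isUnit_sS_sub_one.pow 2)

theorem uS_sq : uS ^ 2 = tS ^ 2 + 4 * tS :=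
  sub_sq_eq_of_mul_eq_one (mul_inverse_cancel _ isUnit_sS)

theorem two_inv_smul_tS_add_two_add_uS : (2 : ℂ)⁻¹ • (tS + 2 + uS) = sS := by
  have := mul_sub_one_sq_add_two (mul_inverse_cancel _ isUnit_sS)
  rw [tS, uS, this]
  module

end S3

section R3

open MvPolynomial

noncomputable def tInvR : R3 := Ideal.Quotient.mk _ (X 1)

theorem tR_mul_tInvR : tR * tInvR = 1 := by
  rw [tR, tInvR, ← map_mul, ← map_one (Ideal.Quotient.mk _), Ideal.Quotient.mk_eq_mk_iff_sub_mem]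
  exact Ideal.subset_span (by simp)

theorem uR_sq : uR ^ 2 = tR ^ 2 + 4 * tR := by
  rw [← sub_eq_zero, ← sub_sub, tR, uR]
  exact Ideal.Quotient.eq_zero_iff_mem.2 (Ideal.subset_span (by simp))

noncomputable def sR : R3 := (2 : ℂ)⁻¹ • (tR + 2 + uR)

noncomputable def sInvR : R3 := (2 : ℂ)⁻¹ • (tR + 2 - uR)

theorem sR_mul_sInvR : sR * sInvR = 1 := by
  rw [sR, sInvR, Algebra.smul_def _ (tR + 2 + uR), Algebra.smul_def _ (tR + 2 - uR)]
  exact half_mul_half_eq_one two_mul_algebraMap_two_inv uR_sq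

theorem sR_sub_one_sq : (sR - 1) ^ 2 = tR * sR := by
  rw [sR, Algebra.smul_def _ (tR + 2 + uR)]
  exact half_sub_one_sq two_mul_algebraMap_two_inv uR_sq

theorem isUnit_sR : IsUnit sR := .of_mul_eq_one _ sR_mul_sInvR

theorem isUnit_sR_sub_one : IsUnit (sR - 1) := by
  rw [← isUnit_pow_iff two_ne_zero, sR_sub_one_sq]
  exact (IsUnit.of_mul_eq_one _ tR_mul_tInvR).mul isUnit_sR

end R3

open MvPolynomial in
theorem span_le_ker_aeval :
    Ideal.span {(X 0 * X 1 - 1 : MvPolynomial (Fin 3) ℂ), X 2 ^ 2 - X 0 ^ 2 - 4 * X 0} ≤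
      RingHom.ker (aeval ![tS, tS⁻¹ʳ, uS]) := by
  rw [Ideal.span_le]
  rintro p (rfl | rfl) <;> simp [mul_inverse_cancel _ isUnit_tS, uS_sq]

noncomputable def toS : R3 →ₐ[ℂ] S3 :=
  Ideal.Quotient.liftₐ _ (MvPolynomial.aeval ![tS, tS⁻¹ʳ, uS]) fun _ ha =>
    RingHom.mem_ker.1 (span_le_ker_aeval ha)

open MvPolynomial in
theorem toS_mk (p : MvPolynomial (Fin 3) ℂ) :
    toS (Ideal.Quotient.mk _ p) = aeval ![tS, tS⁻¹ʳ, uS] p :=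
  rfl

theorem toS_tR : toS tR = tS := by simp [tR, toS_mk]

theorem toS_uR : toS uR = uS := by simp [uR, toS_mk]

theorem toS_sR : toS sR = sS := by
  rw [sR, map_smul, map_add, map_add, map_ofNat, toS_tR, toS_uR, two_inv_smul_tS_add_two_add_uS]

open Polynomial in
theorem isUnit_aeval_sR (y : sDenoms) : IsUnit (aeval sR (y : ℂ[X])) := by
  obtain ⟨y, hy⟩ := y
  induction hy using Submonoid.closure_induction with
  | mem x hx =>
    rcases hx with rfl | rfl
    · simpa using isUnit_sR
    · simpa using isUnit_sR_sub_one
  | one => simp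
  | mul x y _ _ hx hy => simpa using hx.mul hy

noncomputable def toR : S3 →ₐ[ℂ] R3 := IsLocalization.liftAlgHom isUnit_aeval_sR

theorem toR_sS : toR sS = sR := by simp [toR, sS]

theorem toR_inverse_sS : toR sS⁻¹ʳ = sInvR :=
  map_eq_of_mul_eq_one toR (mul_inverse_cancel _ isUnit_sS) (by rw [toR_sS, sR_mul_sInvR])

theorem toR_tS : toR tS = tR := by
  rw [tS, map_mul, map_pow, map_sub, map_one, toR_inverse_sS, toR_sS, sR_sub_one_sq]
  linear_combination tR * sR_mul_sInvR

theorem toR_uS : toR uS = uR := by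
  rw [uS, map_sub, toR_inverse_sS, toR_sS, sR, sInvR, ← smul_sub, add_sub_sub_cancel]
  module

theorem toR_comp_toS : toR.comp toS = AlgHom.id ℂ R3 := by
  refine Ideal.Quotient.algHom_ext ℂ (MvPolynomial.algHom_ext fun i => ?_)
  fin_cases i
  · show toR (toS tR) = tR
    rw [toS_tR, toR_tS]
  · show toR (toS tInvR) = tInvR
    exact map_eq_of_mul_eq_one (toR.comp toS) tR_mul_tInvR
      (by rw [AlgHom.comp_apply, toS_tR, toR_tS, tR_mul_tInvR])
  · show toR (toS uR) = uR
    rw [toS_uR, toR_uS]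

theorem toS_comp_toR : toS.comp toR = AlgHom.id ℂ S3 :=
  IsLocalization.algHom_ext sDenoms <|
    Polynomial.algHom_ext (show toS (toR sS) = sS by rw [toR_sS, toS_sR])

/-- The assignment `t ↦ s⁻¹(s−1)²`, `u ↦ s − s⁻¹` defines a `ℂ`-algebra
isomorphism `f : R ≃ S`, whose inverse is determined by `s ↦ (t+2+u)/2` and
`s⁻¹ ↦ (t+2−u)/2`. -/
theorem stmt17 :
    ∃ f : R3 ≃ₐ[ℂ] S3,
      f tR = Ring.inverse sS * (sS - 1) ^ 2 ∧
      f uR = sS - Ring.inverse sS ∧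
      f.symm sS = (2 : ℂ)⁻¹ • (tR + 2 + uR) ∧
      f.symm (Ring.inverse sS) = (2 : ℂ)⁻¹ • (tR + 2 - uR) :=
  ⟨AlgEquiv.ofAlgHom toS toR toS_comp_toR toR_comp_toS, toS_tR, toS_uR, toR_sS, toR_inverse_sS⟩
end
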